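/- Any message-passing function computed by iterated neighbourhood aggregation with a permutation-invariant readout assigns equal outputs to WL-indistinguishable graphs: if graphs G₁ and G₂ with identical initial node features receive the same multiset of colours at every round of colour refinement, then for any choice of per-layer update functions (depending only on a node's current embedding and the multiset of its neighbours' embeddings) and any multiset readout, the final graph-level outputs on G₁ and G₂ are equal. -/

import Mathlib

/-- The type of WL colours after `t` rounds, starting from initial colours in `C`:
a round-`(t+1)` colour is the pair of the round-`t` colour and the multiset of the
neighbours' round-`t` colours (pairing plays the role of an injective hash). -/
def ColourT (C : Type) : ℕ → Type
  | 0 => C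
  | t + 1 => ColourT C t × Multiset (ColourT C t)

/-- Colour refinement (1-dimensional Weisfeiler–Leman): `c⁰ = c0` and
`c^{t+1}(v) = (c^t(v), {{ c^t(u) : u adjacent to v }})`. -/
def wl {V C : Type} [Fintype V] (G : SimpleGraph V) [DecidableRel G.Adj]
    (c0 : V → C) : (t : ℕ) → V → ColourT C t
  | 0 => c0
  | t + 1 => fun v => (wl G c0 t v, (G.neighborFinset v).val.map (wl G c0 t))

/-- Message-passing embeddings: `h⁰(v)` is the initial feature and
`h^{t+1}(v) = f t (h^t(v), {{ h^t(u) : u ∈ N(v) }})` for arbitrary per-layer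
update functions `f`. -/
def mpnn {V X : Type} [Fintype V] (G : SimpleGraph V) [DecidableRel G.Adj]
    (x0 : V → X) (f : ℕ → X → Multiset X → X) : ℕ → V → X
  | 0 => x0
  | t + 1 => fun v =>
      f t (mpnn G x0 f t v) ((G.neighborFinset v).val.map (mpnn G x0 f t))

/-! A WL colour records the whole unfolding tree of a node, so replaying the update functions
along that tree recovers the node's embedding: every embedding factors through the WL colour,
and equal colour multisets give equal embedding multisets. -/

def ColourT.decode {X : Type} (f : ℕ → X → Multiset X → X) : (t : ℕ) → ColourT X t → X
  | 0, c => c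
  | t + 1, c => f t (decode f t c.1) (c.2.map (decode f t))

theorem mpnn_eq_decode_comp_wl {V X : Type} [Fintype V] (G : SimpleGraph V)
    [DecidableRel G.Adj] (x0 : V → X) (f : ℕ → X → Multiset X → X) (t : ℕ) :
    mpnn G x0 f t = ColourT.decode f t ∘ wl G x0 t := by
  induction t with
  | zero => rfl
  | succ t ih =>
    funext v
    rw [Function.comp_apply]
    simp only [mpnn, wl, ColourT.decode, ih, Function.comp_apply, Multiset.map_map]

theorem map_mpnn_eq_map_decode_map_wl {V X : Type} [Fintype V] (G : SimpleGraph V)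
    [DecidableRel G.Adj] (x0 : V → X) (f : ℕ → X → Multiset X → X) (t : ℕ) (s : Multiset V) :
    s.map (mpnn G x0 f t) = (s.map (wl G x0 t)).map (ColourT.decode f t) := by
  rw [Multiset.map_map, mpnn_eq_decode_comp_wl]

/-- Any message-passing function with a permutation-invariant (multiset) readout
assigns equal outputs to WL-indistinguishable graphs: if the colour-refinement
colour multisets of `G₁` and `G₂` (run from the initial features) agree at every
round `t ≤ T`, then for any per-layer update functions `f` and any readout `Φ` on
multisets, the graph-level outputs after `T` layers are equal. -/
theorem stmt_14 {V₁ V₂ X Y : Type} [Fintype V₁] [Fintype V₂]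
    (G₁ : SimpleGraph V₁) (G₂ : SimpleGraph V₂)
    [DecidableRel G₁.Adj] [DecidableRel G₂.Adj]
    (x0₁ : V₁ → X) (x0₂ : V₂ → X) (T : ℕ)
    (hwl : ∀ t ≤ T, Multiset.map (wl G₁ x0₁ t) Finset.univ.val =
      Multiset.map (wl G₂ x0₂ t) Finset.univ.val)
    (f : ℕ → X → Multiset X → X) (Φ : Multiset X → Y) :
    Φ (Multiset.map (mpnn G₁ x0₁ f T) Finset.univ.val) =
      Φ (Multiset.map (mpnn G₂ x0₂ f T) Finset.univ.val) := by
  rw [map_mpnn_eq_map_decode_map_wl, map_mpnn_eq_map_decode_map_wl, hwl T le_rfl]
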